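/- Multiplication on the generated subspace of context vectors is well-defined independently of the choice of basis: if B₁ and B₂ are subsets of A* whose context vectors each form a basis of the generated subspace 𝒜, then the bilinear product defined on 𝒜 by extending (x̂)·(ŷ) = (xy)̂ on basis elements of B₁ agrees with the product defined the same way using B₂. -/
import Mathlib


/-- The context vector of a string `x`: `x̂(y,z) = L(y x z)`. -/
def ctxVec {A V : Type*} [AddCommGroup V] [Module ℝ V]
    (L : FreeMonoid A → V) (x : FreeMonoid A) :
    (FreeMonoid A × FreeMonoid A) → V :=
  fun p => L (p.1 * x * p.2)

/-- Every context vector lies in the generated subspace 𝒜. -/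
theorem ctxVec_mem_span {A V : Type*} [AddCommGroup V] [Module ℝ V]
    (L : FreeMonoid A → V) (x : FreeMonoid A) :
    ctxVec L x ∈ Submodule.span ℝ (Set.range (ctxVec L)) :=
  Submodule.subset_span ⟨x, rfl⟩

namespace ContextAux

variable {A V : Type*} [AddCommGroup V] [Module ℝ V] (L : FreeMonoid A → V)

/-- The context vector as an element of the generated subspace. -/
noncomputable def e (x : FreeMonoid A) :
    Submodule.span ℝ (Set.range (ctxVec L)) :=
  ⟨ctxVec L x, ctxVec_mem_span L x⟩

lemma coe_sum (c : FreeMonoid A →₀ ℝ) (f : FreeMonoid A → FreeMonoid A) :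
    ((c.sum fun i a => a • e L (f i) :
        Submodule.span ℝ (Set.range (ctxVec L))) : (FreeMonoid A × FreeMonoid A) → V)
      = c.sum fun i a => a • ctxVec L (f i) := by
  have h := map_finsuppSum (Submodule.span ℝ (Set.range (ctxVec L))).subtype
      c (fun i a => a • e L (f i))
  simp only [map_smul, Submodule.coe_subtype] at h
  exact h

/-- Right translation of a linear relation among context vectors. -/
lemma right_rel (d : FreeMonoid A →₀ ℝ) (y b : FreeMonoid A)
    (hd : (d.sum fun j r => r • ctxVec L j) = ctxVec L y) :
    (d.sum fun j r => r • ctxVec L (b * j)) = ctxVec L (b * y) := by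
  funext p
  have h := congrFun hd (p.1 * b, p.2)
  simp only [Finsupp.sum, Finset.sum_apply, Pi.smul_apply, ctxVec] at h ⊢
  simpa [mul_assoc] using h

/-- Left translation of a linear relation among context vectors. -/
lemma left_rel (c : FreeMonoid A →₀ ℝ) (x y : FreeMonoid A)
    (hc : (c.sum fun i r => r • ctxVec L i) = ctxVec L x) :
    (c.sum fun i r => r • ctxVec L (i * y)) = ctxVec L (x * y) := by
  funext p
  have h := congrFun hc (p.1, y * p.2)
  simp only [Finsupp.sum, Finset.sum_apply, Pi.smul_apply, ctxVec] at h ⊢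
  simpa [mul_assoc] using h

/-- Any bilinear map satisfying the defining property on a spanning family `B`
satisfies it everywhere. -/
lemma key (B : Set (FreeMonoid A))
    (hsp : Submodule.span ℝ (ctxVec L '' B)
            = Submodule.span ℝ (Set.range (ctxVec L)))
    (m : Submodule.span ℝ (Set.range (ctxVec L)) →ₗ[ℝ]
         Submodule.span ℝ (Set.range (ctxVec L)) →ₗ[ℝ]
         Submodule.span ℝ (Set.range (ctxVec L)))
    (hm : ∀ x ∈ B, ∀ y ∈ B, m (e L x) (e L y) = e L (x * y))
    (x y : FreeMonoid A) : m (e L x) (e L y) = e L (x * y) := by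
  have hx : ctxVec L x ∈ Submodule.span ℝ (ctxVec L '' B) := by
    rw [hsp]; exact ctxVec_mem_span L x
  have hy : ctxVec L y ∈ Submodule.span ℝ (ctxVec L '' B) := by
    rw [hsp]; exact ctxVec_mem_span L y
  obtain ⟨c, hcsupp, hc⟩ := (Finsupp.mem_span_image_iff_linearCombination ℝ).1 hx
  obtain ⟨d, hdsupp, hd⟩ := (Finsupp.mem_span_image_iff_linearCombination ℝ).1 hy
  rw [Finsupp.linearCombination_apply] at hc hd
  -- lift the representations to the subspace
  have hex : (c.sum fun i a => a • e L i) = e L x := by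
    apply Subtype.ext
    have := coe_sum L c id
    simp only [id] at this
    rw [this]; exact hc
  have hey : (d.sum fun j b => b • e L j) = e L y := by
    apply Subtype.ext
    have := coe_sum L d id
    simp only [id] at this
    rw [this]; exact hd
  -- expand m (e x) (e y)
  have step1 : m (e L x) (e L y) = c.sum fun i a => a • m (e L i) (e L y) := by
    rw [← hex, map_finsuppSum m]
    simp only [Finsupp.sum, map_smul, LinearMap.sum_apply, LinearMap.smul_apply]
  have step2 : ∀ i ∈ c.support, m (e L i) (e L y) = e L (i * y) := by
    intro i hi
    have hiB : i ∈ B := hcsupp hi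
    have : m (e L i) (e L y) = d.sum fun j b => b • m (e L i) (e L j) := by
      rw [← hey, map_finsuppSum]
      simp only [map_smul]
    rw [this]
    have : (d.sum fun j b => b • m (e L i) (e L j))
        = d.sum fun j b => b • e L (i * j) := by
      apply Finsupp.sum_congr
      intro j hj
      rw [hm i hiB j (hdsupp hj)]
    rw [this]
    apply Subtype.ext
    have hco := coe_sum L d (fun j => i * j)
    rw [hco]
    exact right_rel L d y i hd
  have step3 : (c.sum fun i a => a • m (e L i) (e L y))
      = c.sum fun i a => a • e L (i * y) := by
    apply Finsupp.sum_congr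
    intro i hi
    rw [step2 i hi]
  rw [step1, step3]
  apply Subtype.ext
  have hco := coe_sum L c (fun i => i * y)
  rw [hco]
  exact left_rel L c x y hc

/-- The images `e x` span the subspace. -/
lemma span_range_e_top :
    Submodule.span ℝ (Set.range (e L)) = ⊤ := by
  rw [Submodule.eq_top_iff']
  intro u
  obtain ⟨c, hc⟩ := Finsupp.mem_span_range_iff_exists_finsupp.1 u.2
  have : u = c.sum fun i a => a • e L i := by
    apply Subtype.ext
    have := coe_sum L c id
    simp only [id] at this
    rw [this]; exact hc.symm
  rw [this]
  exact Submodule.sum_mem _ fun i _ =>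
    Submodule.smul_mem _ _ (Submodule.subset_span ⟨i, rfl⟩)

end ContextAux

/-- Multiplication on the generated subspace 𝒜 is independent of the choice of
basis: if `B₁` and `B₂` both define bases of 𝒜 via context vectors, then the
bilinear products obtained by extending `x̂ · ŷ = (xy)̂` on the respective bases
agree. -/
theorem context_algebra_mul_well_defined
    {A V : Type*} [AddCommGroup V] [Module ℝ V] (L : FreeMonoid A → V)
    (B₁ B₂ : Set (FreeMonoid A))
    (h₁li : LinearIndependent ℝ (fun b : B₁ => ctxVec L (b : FreeMonoid A)))
    (h₁sp : Submodule.span ℝ (ctxVec L '' B₁)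
            = Submodule.span ℝ (Set.range (ctxVec L)))
    (h₂li : LinearIndependent ℝ (fun b : B₂ => ctxVec L (b : FreeMonoid A)))
    (h₂sp : Submodule.span ℝ (ctxVec L '' B₂)
            = Submodule.span ℝ (Set.range (ctxVec L)))
    (m₁ m₂ : Submodule.span ℝ (Set.range (ctxVec L)) →ₗ[ℝ]
             Submodule.span ℝ (Set.range (ctxVec L)) →ₗ[ℝ]
             Submodule.span ℝ (Set.range (ctxVec L)))
    (hm₁ : ∀ x ∈ B₁, ∀ y ∈ B₁,
      m₁ ⟨ctxVec L x, ctxVec_mem_span L x⟩ ⟨ctxVec L y, ctxVec_mem_span L y⟩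
        = ⟨ctxVec L (x * y), ctxVec_mem_span L (x * y)⟩)
    (hm₂ : ∀ x ∈ B₂, ∀ y ∈ B₂,
      m₂ ⟨ctxVec L x, ctxVec_mem_span L x⟩ ⟨ctxVec L y, ctxVec_mem_span L y⟩
        = ⟨ctxVec L (x * y), ctxVec_mem_span L (x * y)⟩) :
    m₁ = m₂ := by
  have k₁ := ContextAux.key L B₁ h₁sp m₁ hm₁
  have k₂ := ContextAux.key L B₂ h₂sp m₂ hm₂
  apply LinearMap.ext_on_range (ContextAux.span_range_e_top L)
  intro x
  apply LinearMap.ext_on_range (ContextAux.span_range_e_top L)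
  intro y
  rw [k₁ x y, k₂ x y]
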